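/- Let n ≥ 1 and let A_0 ⊆ A_1 ⊆ ⋯ ⊆ A_{n-1} ⊆ B be fields. Then the composite T_n = A_0 + A_1X + ⋯ + A_{n-1}X^{n-1} + X^nB[X] is atomic: every nonzero nonunit element of T_n is a finite product of irreducible elements of T_n. -/

import Mathlib

/-! Degrees add in `T_n`, and a nonzero constant of `T_n` lies in the field `A_0`, so it is a
unit. Hence a proper factor of an element of `T_n` has strictly smaller degree, divisibility
in `T_n` satisfies the descending chain condition, and every nonzero nonunit factors into
atoms. -/

/-- The composite `T_n = A_0 + A_1 X + ⋯ + A_{n-1} X^{n-1} + X^n B[X]` for a chain of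
subfields `A 0 ⊆ A 1 ⊆ ⋯ ⊆ A (n-1) ⊆ B` of a field `B`: the subring (an integral
domain) of `B[X]` of polynomials whose `i`-th coefficient lies in `A i` for all
`i < n`. -/
def fieldCompositeN (B : Type*) [Field B] (n : ℕ) (A : ℕ → Subfield B)
    (hA : ∀ i j, i ≤ j → j < n → A i ≤ A j) : Subring (Polynomial B) where
  carrier := {f | ∀ i, i < n → f.coeff i ∈ A i}
  zero_mem' := fun i _ => by simpa using zero_mem (A i)
  one_mem' := fun i _ => by
    rw [Polynomial.coeff_one]
    split
    · exact one_mem (A i)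
    · exact zero_mem (A i)
  add_mem' := fun hf hg i hi => by
    simpa [Polynomial.coeff_add] using add_mem (hf i hi) (hg i hi)
  neg_mem' := fun hf i hi => by
    simpa [Polynomial.coeff_neg] using neg_mem (s := A i) (hf i hi)
  mul_mem' := by
    intro f g hf hg k hk
    rw [Polynomial.coeff_mul]
    refine sum_mem ?_
    rintro ⟨i, j⟩ hij
    rw [Finset.HasAntidiagonal.mem_antidiagonal] at hij
    have hi : i ≤ k := by omega
    have hj : j ≤ k := by omega
    exact mul_mem (hA i k hi hk (hf i (lt_of_le_of_lt hi hk)))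
      (hA j k hj hk (hg j (lt_of_le_of_lt hj hk)))

open Polynomial

theorem Subring.wfDvdMonoid_of_isUnit_of_natDegree_eq_zero {R : Type*} [CommRing R]
    [NoZeroDivisors R] (S : Subring R[X])
    (hS : ∀ f : S, f ≠ 0 → (f : R[X]).natDegree = 0 → IsUnit f) : WfDvdMonoid S where
  wf := by
    classical
    -- `0` goes to `⊤`: every nonzero element properly divides it.
    refine RelHomClass.wellFounded
      (⟨fun f : S => if f = 0 then (⊤ : ℕ∞) else (f : R[X]).natDegree, ?_⟩ :
        DvdNotUnit →r (· < ·)) wellFounded_lt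
    rintro a _ ⟨ha, c, hc, rfl⟩
    by_cases hac : a * c = 0
    · simp [ha, hac]
    have hc0 : c ≠ 0 := right_ne_zero_of_mul hac
    have hdeg : (c : R[X]).natDegree ≠ 0 := fun h => hc (hS c hc0 h)
    have ha' : (a : R[X]) ≠ 0 := by exact_mod_cast ha
    have hc0' : (c : R[X]) ≠ 0 := by exact_mod_cast hc0
    simp only [if_neg ha, if_neg hac, Subring.coe_mul, natDegree_mul ha' hc0']
    exact_mod_cast Nat.lt_add_of_pos_right (Nat.pos_of_ne_zero hdeg)

section

variable {B : Type*} [Field B] {n : ℕ} {A : ℕ → Subfield B}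
  {hA : ∀ i j, i ≤ j → j < n → A i ≤ A j}

theorem C_mem_fieldCompositeN {a : B} (ha : a ∈ A 0) : C a ∈ fieldCompositeN B n A hA := by
  intro i _
  rw [coeff_C]
  split_ifs with hi
  · exact hi ▸ ha
  · exact zero_mem (A i)

theorem fieldCompositeN.isUnit_of_natDegree_eq_zero (hn : 1 ≤ n) (f : fieldCompositeN B n A hA)
    (hf : f ≠ 0) (hdeg : (f : B[X]).natDegree = 0) : IsUnit f := by
  set a := (f : B[X]).coeff 0
  have hfC : (f : B[X]) = C a := eq_C_of_natDegree_eq_zero hdeg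
  have ha : a ≠ 0 := by
    rw [Ne, ← C_eq_zero, ← hfC]
    exact_mod_cast hf
  refine IsUnit.of_mul_eq_one ⟨C a⁻¹, C_mem_fieldCompositeN (inv_mem (f.2 0 hn))⟩
    (Subtype.ext ?_)
  rw [Subring.coe_mul, hfC, Subring.coe_one, ← C_mul, mul_inv_cancel₀ ha, C_1]

end

/-- Let `n ≥ 1` and let `A 0 ⊆ A 1 ⊆ ⋯ ⊆ A (n-1) ⊆ B` be fields.  Then
the composite `T_n = A_0 + A_1 X + ⋯ + A_{n-1} X^{n-1} + X^n B[X]` is atomic: every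
nonzero nonunit element of `T_n` is a finite product of irreducible elements (atoms)
of `T_n`. -/
theorem fieldCompositeN_atomic (B : Type*) [Field B]
    (n : ℕ) (hn : 1 ≤ n) (A : ℕ → Subfield B)
    (hA : ∀ i j, i ≤ j → j < n → A i ≤ A j)
    (f : fieldCompositeN B n A hA) (hf0 : f ≠ 0) (hfu : ¬ IsUnit f) :
    ∃ l : Multiset (fieldCompositeN B n A hA),
      (∀ x ∈ l, Irreducible x) ∧ l.prod = f := by
  have := Subring.wfDvdMonoid_of_isUnit_of_natDegree_eq_zero (fieldCompositeN B n A hA)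
    (fieldCompositeN.isUnit_of_natDegree_eq_zero hn)
  obtain ⟨l, hl, hprod, -⟩ := (WfDvdMonoid.not_isUnit_iff_exists_factors_eq f hf0).1 hfu
  exact ⟨l, hl, hprod⟩
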